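/- Let $m \geq 1$, let $\{[a_i, b_i]^{T}\}_{i=1}^{m}$ be unit column vectors in $\mathbb{C}^2$, and let $V = \bigotimes_{i=1}^{m} [a_i, b_i]^{T} = [v_1, \dots, v_{2^m}]^{T}$ be their Kronecker product. Then for every integer $r$ with $1 \leq r \leq 2^{m-1}$, one has $\big|\sum_{k=1}^{r} \overline{v_k}\, v_{2^m - k + 1}\big| \leq r \prod_{i=1}^{m} |a_i|\sqrt{1 - |a_i|^2} \leq r \cdot 2^{-m}$. -/

import Mathlib

open Matrix Finset

noncomputable section

/-- The Kronecker product of the `m` two-dimensional vectors `u 0, …, u (m-1)`,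
with the convention `[a₁,b₁]ᵀ ⊗ [a₂,b₂]ᵀ = [a₁a₂, b₁a₂, a₁b₂, b₁b₂]ᵀ`
(the first factor varies fastest). -/
def kronVec {m : ℕ} (u : Fin m → Fin 2 → ℂ) : Fin (2 ^ m) → ℂ :=
  fun k => ∏ i : Fin m, u i (if Nat.testBit k.val i.val then 1 else 0)

/-- The index `2^m - k + 1` in 1-indexed terms, i.e. `2^m - 1 - k` in 0-indexed terms. -/
def revIdx {m : ℕ} (k : Fin (2 ^ m)) : Fin (2 ^ m) :=
  ⟨2 ^ m - 1 - (k : ℕ), by have := Nat.two_pow_pos m; omega⟩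

/-!
Reversing an index `k ↦ 2^m - 1 - k` complements all of its `m` bits, so the entries `v_k` and
`v_{2^m-k+1}` pick complementary coordinates from every factor and `|v̄_k v_{2^m-k+1}|` equals
`∏ |a_i| |b_i| = ∏ |a_i| √(1 - |a_i|²)` for every `k`. The triangle inequality gives the first bound,
and AM-GM, `|a| √(1 - |a|²) ≤ (|a|² + (1 - |a|²)) / 2`, the second.
-/

lemma testBit_revIdx {m : ℕ} (k : Fin (2 ^ m)) (i : Fin m) :
    (revIdx k : ℕ).testBit i = !(k : ℕ).testBit i := by
  have hk : (k : ℕ) < 2 ^ m := k.isLt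
  have hrev : (revIdx k : ℕ) = 2 ^ m - ((k : ℕ) + 1) := by
    simp only [revIdx]
    omega
  rw [hrev, Nat.testBit_two_pow_sub_succ hk]
  simp [i.isLt]

lemma norm_conj_kronVec_mul_kronVec_revIdx {m : ℕ} (u : Fin m → Fin 2 → ℂ) (k : Fin (2 ^ m)) :
    ‖starRingEnd ℂ (kronVec u k) * kronVec u (revIdx k)‖ = ∏ i, ‖u i 0‖ * ‖u i 1‖ := by
  rw [norm_mul, Complex.norm_conj, kronVec, kronVec, norm_prod, norm_prod, ← prod_mul_distrib]
  refine prod_congr rfl fun i _ => ?_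
  rw [testBit_revIdx]
  cases (k : ℕ).testBit i <;> simp [mul_comm]

lemma Real.mul_sqrt_one_sub_sq_le_half (x : ℝ) : x * √(1 - x ^ 2) ≤ 1 / 2 := by
  rcases le_or_gt 0 (1 - x ^ 2) with h | h
  · nlinarith [Real.sq_sqrt h, sq_nonneg (x - √(1 - x ^ 2))]
  · rw [Real.sqrt_eq_zero_of_nonpos h.le]
    norm_num

theorem stmt8 (m : ℕ) (u : Fin m → Fin 2 → ℂ)
    (hu : ∀ i, ‖u i 0‖ ^ 2 + ‖u i 1‖ ^ 2 = 1)
    (r : ℕ) (hr2 : r ≤ 2 ^ (m - 1)) :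
    ‖∑ k : Fin r,
        (starRingEnd ℂ)
            (kronVec u (Fin.castLE (hr2.trans (Nat.pow_le_pow_right (by norm_num) (m.sub_le 1))) k))
          * kronVec u (revIdx (Fin.castLE (hr2.trans (Nat.pow_le_pow_right (by norm_num) (m.sub_le 1))) k))‖
      ≤ (r : ℝ) * ∏ i : Fin m, ‖u i 0‖ * Real.sqrt (1 - ‖u i 0‖ ^ 2)
    ∧ (r : ℝ) * (∏ i : Fin m, ‖u i 0‖ * Real.sqrt (1 - ‖u i 0‖ ^ 2))
      ≤ (r : ℝ) * ((2 : ℝ) ^ m)⁻¹ := by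
  have hu1 : ∀ i, ‖u i 1‖ = √(1 - ‖u i 0‖ ^ 2) := fun i => by
    rw [← hu i, add_sub_cancel_left, Real.sqrt_sq (norm_nonneg _)]
  constructor
  · refine (norm_sum_le_of_le _ fun k _ => (norm_conj_kronVec_mul_kronVec_revIdx u _).le).trans_eq ?_
    simp [hu1]
  · gcongr
    calc ∏ i, ‖u i 0‖ * √(1 - ‖u i 0‖ ^ 2)
        ≤ ∏ _i : Fin m, (1 / 2 : ℝ) :=
          prod_le_prod (fun i _ => by positivity) fun i _ => Real.mul_sqrt_one_sub_sq_le_half _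
      _ = ((2 : ℝ) ^ m)⁻¹ := by simp
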